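/- For any integer k ∈ ℤ, the domination ratio of the integer distance digraph Γ(ℤ, {1, 3k+2}) equals 1/3. -/
import Mathlib


open Filter

/-- Lower density of a set of integers. -/
noncomputable def lowerDensity (D : Set ℤ) : ℝ :=
  Filter.liminf (fun n : ℕ =>
    ((D ∩ Set.Icc (-(n : ℤ)) (n : ℤ)).ncard : ℝ) / (2 * (n : ℝ) + 1)) Filter.atTop

/-- `D` is a dominating set of the integer distance digraph `Γ(ℤ,S)`. -/
def Dominating (S D : Set ℤ) : Prop :=
  ∀ m : ℤ, m ∈ D ∨ ∃ u ∈ D, ∃ s ∈ S, m = u + s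

/-- Domination ratio of `Γ(ℤ,S)`. -/
noncomputable def dominationRatio (S : Set ℤ) : ℝ :=
  sInf (lowerDensity '' {D : Set ℤ | Dominating S D})

/-- `D` is an efficient dominating set of `Γ(ℤ,S)`: every integer is dominated
by exactly one element of `D`. -/
def EffDominating (S D : Set ℤ) : Prop :=
  ∀ m : ℤ, ∃! u, u ∈ D ∧ (u = m ∨ m - u ∈ S)

-- ncard of integer Icc
lemma ncard_Icc_int (a b : ℤ) : (Set.Icc a b).ncard = (b + 1 - a).toNat := by
  rw [← Finset.coe_Icc, Set.ncard_coe_finset, Int.card_Icc]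

lemma count_key (k : ℤ) (D : Set ℤ) (hD : Dominating {1, 3 * k + 2} D) (n : ℕ) :
    2 * n + 1 ≤ 3 * (D ∩ Set.Icc (-((n + (3*k+2).natAbs + 1 : ℕ) : ℤ))
      ((n + (3*k+2).natAbs + 1 : ℕ) : ℤ)).ncard := by
  classical
  set M : ℕ := (3*k+2).natAbs + 1 with hM
  have hch : ∀ m : ℤ, ∃ u, u ∈ D ∧ (m - u = 0 ∨ m - u = 1 ∨ m - u = 3*k+2) := by
    intro m
    rcases hD m with h | ⟨u, hu, s, hs, rfl⟩
    · exact ⟨m, h, by left; ring⟩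
    · rcases hs with rfl | rfl
      · exact ⟨u, hu, by right; left; ring⟩
      · exact ⟨u, hu, by right; right; ring⟩
  choose f hfD hfs using hch
  set T : Finset ℤ := Finset.Icc (-(n:ℤ)) (n:ℤ) with hT
  have hcardT : T.card = 2 * n + 1 := by
    rw [hT, Int.card_Icc]; omega
  have hstep : T.card ≤ 3 * (T.image f).card := by
    apply Finset.card_le_mul_card_image
    intro b _
    have hsub : {a ∈ T | f a = b} ⊆ ({b, b + 1, b + (3*k+2)} : Finset ℤ) := by
      intro a ha
      simp only [Finset.mem_filter] at ha
      have := hfs a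
      rw [ha.2] at this
      simp only [Finset.mem_insert, Finset.mem_singleton]
      omega
    calc {a ∈ T | f a = b}.card ≤ ({b, b + 1, b + (3*k+2)} : Finset ℤ).card :=
          Finset.card_le_card hsub
      _ ≤ ({b + 1, b + (3*k+2)} : Finset ℤ).card + 1 := Finset.card_insert_le _ _
      _ ≤ (({b + (3*k+2)} : Finset ℤ).card + 1) + 1 :=
          Nat.add_le_add_right (Finset.card_insert_le _ _) 1
      _ ≤ 3 := by simp
  have himg : ((T.image f : Finset ℤ) : Set ℤ) ⊆
      D ∩ Set.Icc (-((n + M : ℕ) : ℤ)) ((n + M : ℕ) : ℤ) := by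
    intro x hx
    simp only [Finset.coe_image, Set.mem_image, Finset.mem_coe, hT, Finset.mem_Icc] at hx
    obtain ⟨a, ha, rfl⟩ := hx
    refine ⟨hfD a, ?_⟩
    have := hfs a
    simp only [Set.mem_Icc]
    have hM' : (M : ℤ) = (3*k+2).natAbs + 1 := by exact_mod_cast rfl
    omega
  have hfin : (D ∩ Set.Icc (-((n + M : ℕ) : ℤ)) ((n + M : ℕ) : ℤ)).Finite :=
    (Set.finite_Icc _ _).subset Set.inter_subset_right
  have h2 : (T.image f).card ≤
      (D ∩ Set.Icc (-((n + M : ℕ) : ℤ)) ((n + M : ℕ) : ℤ)).ncard := by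
    rw [← Set.ncard_coe_finset]
    exact Set.ncard_le_ncard himg hfin
  have : n + (3*k+2).natAbs + 1 = n + M := by omega
  rw [this]
  omega

theorem lower_bound (k : ℤ) (D : Set ℤ) (hD : Dominating {1, 3 * k + 2} D) :
    1 / 3 ≤ lowerDensity D := by
  set M : ℕ := (3*k+2).natAbs + 1 with hM
  set f : ℕ → ℝ := fun n =>
    ((D ∩ Set.Icc (-(n : ℤ)) (n : ℤ)).ncard : ℝ) / (2 * (n : ℝ) + 1) with hf
  set g : ℕ → ℝ := fun n => 1/3 - (M : ℝ) / n with hg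
  have hgt : Tendsto g atTop (nhds (1/3)) := by
    have := (tendsto_const_div_atTop_nhds_zero_nat (M : ℝ)).const_sub (1/3 : ℝ)
    simpa [hg, one_div] using this
  have hev : ∀ᶠ n in atTop, g n ≤ f n := by
    filter_upwards [eventually_ge_atTop (M + 1)] with n hn
    have hkey := count_key k D hD (n - M)
    have hnM : n - M + (3*k+2).natAbs + 1 = n := by omega
    rw [hnM] at hkey
    set c : ℕ := (D ∩ Set.Icc (-(n:ℤ)) (n:ℤ)).ncard with hc
    have hcast : (2 : ℝ) * ((n - M : ℕ) : ℝ) + 1 ≤ 3 * c := by exact_mod_cast hkey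
    have hsub : ((n - M : ℕ) : ℝ) = (n : ℝ) - M := by
      have h' : M ≤ n := by omega
      push_cast [h']; ring
    rw [hsub] at hcast
    have hn1 : (1 : ℝ) ≤ n := by exact_mod_cast Nat.one_le_iff_ne_zero.mpr (by omega)
    have hn0 : (0 : ℝ) < n := by linarith
    have hd : (0 : ℝ) < 2 * n + 1 := by linarith
    have hM0 : (0 : ℝ) ≤ M := Nat.cast_nonneg M
    show 1/3 - (M : ℝ) / n ≤ c / (2 * (n:ℝ) + 1)
    rw [sub_le_iff_le_add]
    have hcomb : (c:ℝ)/(2*(n:ℝ)+1) + (M:ℝ)/(n:ℝ) = ((c:ℝ)*n + M*(2*n+1))/((2*(n:ℝ)+1)*n) := by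
      field_simp
    rw [hcomb, div_le_div_iff₀ (by norm_num : (0:ℝ) < 3) (by positivity)]
    nlinarith [(Nat.cast_nonneg c : (0:ℝ) ≤ c)]
  have hcob : IsCoboundedUnder (· ≥ ·) atTop f := by
    apply isCoboundedUnder_ge_of_le (l := atTop) (x := 1)
    intro n
    have hle : (D ∩ Set.Icc (-(n:ℤ)) (n:ℤ)).ncard ≤ 2 * n + 1 := by
      have h2 := Set.ncard_le_ncard (Set.inter_subset_right
        (s := D) (t := Set.Icc (-(n:ℤ)) (n:ℤ))) (Set.finite_Icc _ _)
      rw [ncard_Icc_int] at h2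
      omega
    have hd : (0 : ℝ) < 2 * n + 1 := by positivity
    show ((D ∩ Set.Icc (-(n:ℤ)) (n:ℤ)).ncard : ℝ) / (2 * (n:ℝ) + 1) ≤ 1
    rw [div_le_one hd]
    exact_mod_cast hle
  calc (1:ℝ)/3 = liminf g atTop := (hgt.liminf_eq).symm
    _ ≤ liminf f atTop := liminf_le_liminf hev hgt.isBoundedUnder_ge hcob

def D3 : Set ℤ := {m : ℤ | (3:ℤ) ∣ m}

lemma D3_dominating (k : ℤ) : Dominating {1, 3 * k + 2} D3 := by
  intro m
  have h : (3:ℤ) ∣ m ∨ (3:ℤ) ∣ (m - 1) ∨ (3:ℤ) ∣ (m - (3*k+2)) := by omega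
  rcases h with h | h | h
  · exact Or.inl h
  · exact Or.inr ⟨m - 1, h, 1, Or.inl rfl, by ring⟩
  · exact Or.inr ⟨m - (3*k+2), h, 3*k+2, Or.inr rfl, by ring⟩

lemma D3_count (n : ℕ) :
    (D3 ∩ Set.Icc (-(n:ℤ)) (n:ℤ)).ncard = 2 * (n / 3) + 1 := by
  have himg : D3 ∩ Set.Icc (-(n:ℤ)) (n:ℤ)
      = (fun j : ℤ => 3 * j) '' Set.Icc (-((n/3 : ℕ) : ℤ)) ((n/3 : ℕ) : ℤ) := by
    ext m
    simp only [D3, Set.mem_inter_iff, Set.mem_setOf_eq, Set.mem_Icc, Set.mem_image]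
    constructor
    · rintro ⟨⟨j, rfl⟩, h1, h2⟩
      exact ⟨j, ⟨by omega, by omega⟩, by ring⟩
    · rintro ⟨j, ⟨h1, h2⟩, rfl⟩
      exact ⟨⟨j, rfl⟩, by omega, by omega⟩
  rw [himg, Set.ncard_image_of_injective _ (fun a b h => by omega), ncard_Icc_int]
  omega

lemma D3_density : lowerDensity D3 = 1 / 3 := by
  have ht : Tendsto (fun n : ℕ =>
      ((D3 ∩ Set.Icc (-(n : ℤ)) (n : ℤ)).ncard : ℝ) / (2 * (n : ℝ) + 1)) atTop
      (nhds (1/3)) := by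
    have hdiff : Tendsto (fun n : ℕ =>
        ((D3 ∩ Set.Icc (-(n : ℤ)) (n : ℤ)).ncard : ℝ) / (2 * (n : ℝ) + 1) - 1/3) atTop
        (nhds 0) := by
      apply squeeze_zero_norm' (a := fun n : ℕ => 1 / (n:ℝ))
      · filter_upwards [eventually_ge_atTop 1] with n hn
        rw [D3_count n]
        have hn1 : (1:ℝ) ≤ n := by exact_mod_cast hn
        have hn0 : (0:ℝ) < n := by linarith
        have hd : (0:ℝ) < 2 * n + 1 := by linarith
        set q : ℕ := n / 3 with hq
        have hqr : (q:ℝ) * 3 ≤ n ∧ (n:ℝ) ≤ q * 3 + 2 := by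
          constructor <;> exact_mod_cast (by omega : _)
        have heq : ((2 * q + 1 : ℕ) : ℝ) / (2 * (n:ℝ) + 1) - 1/3
            = (6 * (q:ℝ) + 2 - 2 * n) / (3 * (2 * n + 1)) := by
          push_cast
          field_simp
          ring
        rw [heq, Real.norm_eq_abs, abs_div, abs_of_pos (by linarith : (0:ℝ) < 3 * (2*n+1))]
        rw [div_le_div_iff₀ (by linarith) hn0]
        have habs : |6 * (q:ℝ) + 2 - 2 * n| ≤ 2 := by
          rw [abs_le]; constructor <;> nlinarith [hqr.1, hqr.2]
        nlinarith [habs]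
      · exact tendsto_one_div_atTop_nhds_zero_nat
    have := hdiff.add_const (1/3 : ℝ)
    simpa using this
  exact ht.liminf_eq


theorem stmt_9 (k : ℤ) : dominationRatio {1, 3 * k + 2} = 1 / 3 := by
  have hbdd : ∀ x ∈ lowerDensity '' {D : Set ℤ | Dominating {1, 3 * k + 2} D}, 1/3 ≤ x := by
    rintro x ⟨D, hD, rfl⟩
    exact lower_bound k D hD
  have hmem : (1:ℝ)/3 ∈ lowerDensity '' {D : Set ℤ | Dominating {1, 3 * k + 2} D} :=
    ⟨D3, D3_dominating k, D3_density⟩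
  apply le_antisymm
  · exact csInf_le ⟨1/3, fun x hx => hbdd x hx⟩ hmem
  · exact le_csInf ⟨1/3, hmem⟩ hbdd
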